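/- Let ẽ' = Ã ẽ with Ã = [[A+BK, −LC],[0, A+LC]] for the coordinates ẽ = (x̂ − X x_r, x − x̂), where observer x̂' = A x̂ + B u − L(y − C x̂), plant x' = A x + B u, y = C x, u = K x̂ + K_r x̂_r, and (X, K_r) solve the regulator equations X A_r = A X + B K_r + B K X, C X = C_r. If A+BK, A+LC, and A_r+L_rC_r are Hurwitz, then the tracking error e = C x − C_r x_r converges to 0 for all initial conditions (Theorem 1, output regulation via observer-based feedback). -/

import Mathlib

open Matrix Filter Topology

def IsHurwitz {n : Type*} [Fintype n] [DecidableEq n] (A : Matrix n n ℝ) : Prop :=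
  ∀ μ ∈ spectrum ℂ (A.map Complex.ofReal), μ.re < 0

/-!
In the coordinates `x - x̂`, `x_r - x̂_r` and `w = x - X x_r` the closed loop is block triangular:
both observer errors follow autonomous Hurwitz dynamics, and the regulator equations turn the
dynamics of `w` into `w' = (A + BK) w + f`, with `f` linear in the observer errors, while the
tracking error is `C w`. So everything reduces to the fact that a Hurwitz system driven by a
vanishing input has vanishing solutions. Over `ℂ` this follows by peeling off, one at a time, the
factors `M - μ` of the Cayley–Hamilton identity `∏ (M - μ) = 0`: each step is a scalar equation
`z' = μ z + g` with `Re μ < 0`, for which `‖z‖²` is a Lyapunov function and Grönwall's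
inequality gives the decay.
-/
theorem HasDerivAt.const_mulVec {𝕜 ι κ : Type*} [RCLike 𝕜] [Fintype ι] [Fintype κ]
    (M : Matrix ι κ 𝕜) {v : ℝ → κ → 𝕜} {v' : κ → 𝕜} {t : ℝ}
    (hv : HasDerivAt v v' t) : HasDerivAt (fun s => M *ᵥ v s) (M *ᵥ v') t :=
  (M.mulVecLin.restrictScalars ℝ).toContinuousLinearMap.hasFDerivAt.comp_hasDerivAt t hv

theorem Filter.Tendsto.const_mulVec {α R ι κ : Type*} [TopologicalSpace R]
    [NonUnitalNonAssocSemiring R] [IsTopologicalSemiring R] [Fintype κ] {l : Filter α}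
    (M : Matrix ι κ R) {v : α → κ → R} (hv : Tendsto v l (𝓝 0)) :
    Tendsto (fun s => M *ᵥ v s) l (𝓝 0) := by
  simpa [Function.comp_def] using ((continuous_const.matrix_mulVec continuous_id).tendsto 0).comp hv

theorem tendsto_zero_of_hasDerivAt_le_neg_mul_add {u u' b : ℝ → ℝ} {c : ℝ} (hc : 0 < c)
    (hu : ∀ t, HasDerivAt u (u' t) t) (hbound : ∀ t, u' t ≤ -c * u t + b t)
    (hb : Tendsto b atTop (𝓝 0)) (hu0 : ∀ t, 0 ≤ u t) : Tendsto u atTop (𝓝 0) := by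
  refine tendsto_order.2 ⟨fun a ha => .of_forall fun t => ha.trans_le (hu0 t), fun ε hε => ?_⟩
  obtain ⟨T, hT⟩ := eventually_atTop.1 ((tendsto_order.1 hb).2 (c * ε / 2) (by positivity))
  have hdecay : Tendsto (fun t => u T * Real.exp (-c * (t - T))) atTop (𝓝 0) := by
    simpa [sub_eq_add_neg] using (Real.tendsto_exp_neg_atTop_nhds_zero.comp
      ((tendsto_atTop_add_const_right _ (-T) tendsto_id).const_mul_atTop hc)).const_mul (u T)
  filter_upwards [eventually_ge_atTop T, (tendsto_order.1 hdecay).2 (ε / 2) (by positivity)]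
    with t hTt ht
  have hgronwall := le_gronwallBound_of_liminf_deriv_right_le (f := u) (K := -c)
    (ε := c * ε / 2) (fun s _ => (hu s).continuousAt.continuousWithinAt)
    (fun s _ _ hr => (hu s).hasDerivWithinAt.liminf_right_slope_le hr) le_rfl
    (fun s hs => (hbound s).trans (by linarith [hT s hs.1])) t ⟨hTt, le_rfl⟩
  rw [gronwallBound_of_K_ne_0 (neg_ne_zero.2 hc.ne'),
    show c * ε / 2 / -c = -(ε / 2) by field_simp] at hgronwall
  nlinarith [Real.exp_pos (-c * (t - T))]

theorem Complex.inner_mul_right_self (z μ : ℂ) : inner ℝ z (μ * z) = μ.re * ‖z‖ ^ 2 := by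
  rw [Complex.inner, mul_assoc, Complex.mul_conj, Complex.normSq_eq_norm_sq, Complex.re_mul_ofReal]

theorem Complex.tendsto_zero_of_hasDerivAt_mul_add {x g : ℝ → ℂ} {μ : ℂ} (hμ : μ.re < 0)
    (hx : ∀ t, HasDerivAt x (μ * x t + g t) t) (hg : Tendsto g atTop (𝓝 0)) :
    Tendsto x atTop (𝓝 0) := by
  have hc : 0 < -μ.re := neg_pos.2 hμ
  have hsq : Tendsto (fun t => ‖x t‖ ^ 2) atTop (𝓝 0) := by
    refine tendsto_zero_of_hasDerivAt_le_neg_mul_add hc (fun t => (hx t).norm_sq) (fun t => ?_)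
      (b := fun t => (-μ.re)⁻¹ * ‖g t‖ ^ 2) ?_ (fun t => by positivity)
    · rw [inner_add_right, Complex.inner_mul_right_self]
      nlinarith [real_inner_le_norm (x t) (g t),
        two_mul_le_add_mul_sq (a := ‖x t‖) (b := ‖g t‖) hc]
    · simpa using (hg.norm.pow 2).const_mul (-μ.re)⁻¹
  simpa [Function.comp_def, Real.sqrt_sq (norm_nonneg _), tendsto_zero_iff_norm_tendsto_zero]
    using (Real.continuous_sqrt.tendsto 0).comp hsq

section LinearODE

open Polynomial

variable {ι : Type*} [Fintype ι] [DecidableEq ι] {M : Matrix ι ι ℂ} {v f : ℝ → ι → ℂ}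

theorem tendsto_zero_of_hasDerivAt_of_tendsto_sub_smul_mulVec {μ : ℂ} (hμ : μ.re < 0)
    (hv : ∀ t, HasDerivAt v (M *ᵥ v t + f t) t) (hf : Tendsto f atTop (𝓝 0))
    (hμv : Tendsto (fun t => (M - μ • 1) *ᵥ v t) atTop (𝓝 0)) : Tendsto v atTop (𝓝 0) := by
  refine tendsto_pi_nhds.2 fun i => Complex.tendsto_zero_of_hasDerivAt_mul_add hμ
    (g := fun t => (((M - μ • 1) *ᵥ v t + f t : ι → ℂ)) i) (fun t => ?_) ?_
  · refine (hasDerivAt_pi.1 (hv t) i).congr_deriv ?_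
    simp only [Pi.add_apply, sub_mulVec, smul_mulVec, one_mulVec, Pi.sub_apply, Pi.smul_apply,
      smul_eq_mul]
    ring
  · simpa using tendsto_pi_nhds.1 (hμv.add hf) i

theorem tendsto_zero_of_hasDerivAt_of_tendsto_aeval_prod_mulVec {s : Multiset ℂ}
    (hs : ∀ μ ∈ s, μ.re < 0) (hv : ∀ t, HasDerivAt v (M *ᵥ v t + f t) t)
    (hf : Tendsto f atTop (𝓝 0))
    (hsv : Tendsto (fun t => aeval M (s.map (X - C ·)).prod *ᵥ v t) atTop (𝓝 0)) :
    Tendsto v atTop (𝓝 0) := by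
  induction s using Multiset.induction_on with
  | empty => simpa using hsv
  | cons μ s ih =>
    set Q := aeval M (s.map (X - C ·)).prod
    have hQv : ∀ t, HasDerivAt (fun t => Q *ᵥ v t) (M *ᵥ (Q *ᵥ v t) + Q *ᵥ f t) t := fun t => by
      convert (hv t).const_mulVec Q using 1
      rw [mulVec_add, mulVec_mulVec, mulVec_mulVec,
        (by simpa using (commute_X _).map (aeval M) : Commute M Q).eq]
    refine ih (fun ν hν => hs ν (Multiset.mem_cons_of_mem hν)) ?_
    refine tendsto_zero_of_hasDerivAt_of_tendsto_sub_smul_mulVec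
      (hs μ (Multiset.mem_cons_self _ _)) hQv (hf.const_mulVec Q) ?_
    simpa [Q, mulVec_mulVec, Algebra.algebraMap_eq_smul_one] using hsv

theorem tendsto_zero_of_hasDerivAt_of_spectrum_re_neg (hM : ∀ μ ∈ spectrum ℂ M, μ.re < 0)
    (hv : ∀ t, HasDerivAt v (M *ᵥ v t + f t) t) (hf : Tendsto f atTop (𝓝 0)) :
    Tendsto v atTop (𝓝 0) := by
  refine tendsto_zero_of_hasDerivAt_of_tendsto_aeval_prod_mulVec
    (fun μ hμ => hM μ (mem_spectrum_of_isRoot_charpoly (isRoot_of_mem_roots hμ))) hv hf ?_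
  simp [← ((IsAlgClosed.splits M.charpoly).eq_prod_roots_of_monic M.charpoly_monic),
    aeval_self_charpoly]

end LinearODE

theorem IsHurwitz.tendsto_zero_of_hasDerivAt {ι : Type*} [Fintype ι] [DecidableEq ι]
    {M : Matrix ι ι ℝ} (hM : IsHurwitz M) {v f : ℝ → ι → ℝ}
    (hv : ∀ t, HasDerivAt v (M *ᵥ v t + f t) t) (hf : Tendsto f atTop (𝓝 0)) :
    Tendsto v atTop (𝓝 0) := by
  have hofReal : Continuous fun (w : ι → ℝ) (i : ι) => (w i : ℂ) := by fun_prop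
  have hV : ∀ t, HasDerivAt (fun s i => (v s i : ℂ))
      (M.map Complex.ofReal *ᵥ (fun i => (v t i : ℂ)) + fun i => (f t i : ℂ)) t :=
    fun t => hasDerivAt_pi.2 fun i => ((hasDerivAt_pi.1 (hv t) i).ofReal_comp).congr_deriv
      (by
        rw [Pi.add_apply, Complex.ofReal_add]
        exact congr($(RingHom.map_mulVec Complex.ofRealHom M (v t) i) + _))
  have hV0 := tendsto_zero_of_hasDerivAt_of_spectrum_re_neg hM hV
    ((hofReal.tendsto' 0 0 (by ext; simp)).comp hf)
  exact tendsto_pi_nhds.2 fun i => by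
    simpa [Function.comp_def] using (Complex.continuous_re.tendsto 0).comp (tendsto_pi_nhds.1 hV0 i)

section Regulation

variable {ι κ ρ : Type*} [Fintype ι] [Fintype κ] [Fintype ρ]

theorem observer_error_tendsto_zero [DecidableEq ι] {A : Matrix ι ι ℝ} {C : Matrix κ ι ℝ}
    {L : Matrix ι κ ℝ} (hL : IsHurwitz (A + L * C)) {x xh w : ℝ → ι → ℝ}
    (hx : ∀ t, HasDerivAt x (A *ᵥ x t + w t) t)
    (hxh : ∀ t, HasDerivAt xh (A *ᵥ xh t + w t - L *ᵥ (C *ᵥ x t - C *ᵥ xh t)) t) :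
    Tendsto (fun t => x t - xh t) atTop (𝓝 0) := by
  refine hL.tendsto_zero_of_hasDerivAt (f := 0) (fun t => ((hx t).sub (hxh t)).congr_deriv ?_)
    tendsto_const_nhds
  simp only [add_mulVec, mulVec_sub, ← mulVec_mulVec, Pi.zero_apply, add_zero]
  abel

theorem regulation_error_hasDerivAt {A : Matrix ι ι ℝ} {B : Matrix ι κ ℝ} {K : Matrix κ ι ℝ}
    {Ar : Matrix ρ ρ ℝ} {Kr : Matrix κ ρ ℝ} {X : Matrix ι ρ ℝ}
    (hreg : X * Ar = A * X + B * Kr + B * K * X) {x xh : ℝ → ι → ℝ} {xr xhr : ℝ → ρ → ℝ}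
    {t : ℝ} (hx : HasDerivAt x (A *ᵥ x t + B *ᵥ (K *ᵥ xh t + Kr *ᵥ xhr t)) t)
    (hxr : HasDerivAt xr (Ar *ᵥ xr t) t) :
    HasDerivAt (fun s => x s - X *ᵥ xr s) ((A + B * K) *ᵥ (x t - X *ᵥ xr t)
      + -((B * K) *ᵥ (x t - xh t) + (B * Kr) *ᵥ (xr t - xhr t))) t := by
  refine (hx.sub (hxr.const_mulVec X)).congr_deriv ?_
  rw [mulVec_mulVec, hreg]
  simp only [add_mulVec, mulVec_add, mulVec_sub, ← mulVec_mulVec]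
  abel

end Regulation

/-- Theorem 1 (output regulation via observer-based feedback): with state
observer, exosystem observer, feedback `u = K x̂ + K_r x̂_r`, regulator
equations, and Hurwitz `A+BK`, `A+LC`, `A_r+L_rC_r`, the tracking error
`e = C x − C_r x_r` tends to zero for all initial conditions. -/
theorem output_regulation_observer_feedback {n m p q : ℕ}
    (A : Matrix (Fin n) (Fin n) ℝ) (B : Matrix (Fin n) (Fin m) ℝ)
    (C : Matrix (Fin p) (Fin n) ℝ)
    (Ar : Matrix (Fin q) (Fin q) ℝ) (Cr : Matrix (Fin p) (Fin q) ℝ)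
    (K : Matrix (Fin m) (Fin n) ℝ) (L : Matrix (Fin n) (Fin p) ℝ)
    (Lr : Matrix (Fin q) (Fin p) ℝ) (Kr : Matrix (Fin m) (Fin q) ℝ)
    (X : Matrix (Fin n) (Fin q) ℝ)
    (hK : IsHurwitz (A + B * K)) (hL : IsHurwitz (A + L * C))
    (hLr : IsHurwitz (Ar + Lr * Cr))
    (hreg1 : X * Ar = A * X + B * Kr + B * K * X)
    (hreg2 : C * X = Cr)
    (x xh : ℝ → Fin n → ℝ) (xr xhr : ℝ → Fin q → ℝ)
    (u : ℝ → Fin m → ℝ)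
    (hu : ∀ t, u t = K.mulVec (xh t) + Kr.mulVec (xhr t))
    (hx : ∀ t : ℝ, HasDerivAt x (A.mulVec (x t) + B.mulVec (u t)) t)
    (hxh : ∀ t : ℝ, HasDerivAt xh
      (A.mulVec (xh t) + B.mulVec (u t)
        - L.mulVec (C.mulVec (x t) - C.mulVec (xh t))) t)
    (hxr : ∀ t : ℝ, HasDerivAt xr (Ar.mulVec (xr t)) t)
    (hxhr : ∀ t : ℝ, HasDerivAt xhr
      (Ar.mulVec (xhr t) - Lr.mulVec (Cr.mulVec (xr t) - Cr.mulVec (xhr t))) t) :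
    Tendsto (fun t => C.mulVec (x t) - Cr.mulVec (xr t)) atTop (𝓝 0) := by
  have hexo_error : Tendsto (fun t => xr t - xhr t) atTop (𝓝 0) :=
    observer_error_tendsto_zero hLr (w := 0) (fun t => by simpa using hxr t)
      (fun t => by simpa using hxhr t)
  have hstate_error : Tendsto (fun t => x t - xh t) atTop (𝓝 0) :=
    observer_error_tendsto_zero hL hx hxh
  have hregulation_error : Tendsto (fun t => x t - X *ᵥ xr t) atTop (𝓝 0) :=
    hK.tendsto_zero_of_hasDerivAt
      (fun t => regulation_error_hasDerivAt hreg1 (hu t ▸ hx t) (hxr t))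
      (by simpa using ((hstate_error.const_mulVec (B * K)).add
        (hexo_error.const_mulVec (B * Kr))).neg)
  have htracking : (fun t => C *ᵥ x t - Cr *ᵥ xr t) = fun t => C *ᵥ (x t - X *ᵥ xr t) := by
    ext1 t
    rw [mulVec_sub, mulVec_mulVec, hreg2]
  rw [htracking]
  exact hregulation_error.const_mulVec C
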